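/- arXiv:1507.08255 — 4 statements merged into one kernel-verified Lean document; each statement's English description precedes it below -/
import Mathlib

section
/- Let θ ∈ [0, 2π) be a rational multiple of π such that cos θ has algebraic degree 2 over ℚ. Then 2cos θ is a root of a monic integer quadratic x² + ax + b with both roots of absolute value less than 2, and consequently cos θ ∈ {±1/√2, ±√3/2, ±1/4 ± √5/4}. -/
/-!
Put `x = 2 cos θ`. If `N θ ∈ 2πℤ`, then `x` is a root of `C_N - 2`, where `C_N` is the normalised
Chebyshev polynomial, `C_N (t + t⁻¹) = t ^ N + t⁻¹ ^ N`. Hence `x` is an algebraic integer, its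
minimal polynomial `X ^ 2 + a X + b` has integer coefficients, and both of its roots are roots of
`C_N - 2`. Writing such a root as `t + t⁻¹` forces `t ^ N = 1`, so the root is `2 Re t ∈ [-2, 2]`;
irreducibility rules out `±2`. The only integer quadratics with two irrational roots in `(-2, 2)`
are `X ^ 2 - 2`, `X ^ 2 - 3` and `X ^ 2 ± X - 1`.
-/

open Real Polynomial

namespace Polynomial.Chebyshev

theorem exists_abs_le_two_of_C_eval_eq_two {y : ℂ} {n : ℕ} (hn : n ≠ 0)
    (hy : (C ℂ n).eval y = 2) : ∃ u : ℝ, |u| ≤ 2 ∧ y = u := by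
  obtain ⟨s, hs⟩ := IsAlgClosed.exists_eq_mul_self (y ^ 2 - 4)
  -- `t` is a root of `X ^ 2 - y * X + 1`, so that `y = t + t⁻¹`.
  set t := (y + s) / 2
  have ht : t * (y - t) = 1 := by linear_combination hs / 4
  have hsum : t ^ n + (y - t) ^ n = 2 := by
    rw [← dickson_one_one_eval_add_inv t (y - t) ht, add_sub_cancel, dickson_one_one_eq_chebyshev_C,
      hy]
  have htn : t ^ n = 1 := by
    have hprod : t ^ n * (y - t) ^ n = 1 := by rw [← mul_pow, ht, one_pow]
    have hsq : (t ^ n - 1) ^ 2 = 0 := by linear_combination t ^ n * hsum - hprod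
    exact sub_eq_zero.mp (pow_eq_zero_iff two_ne_zero |>.mp hsq)
  have hnorm : ‖t‖ = 1 := Complex.norm_eq_one_of_pow_eq_one htn hn
  refine ⟨2 * t.re, ?_, ?_⟩
  · rw [abs_mul, abs_two]
    linarith [Complex.abs_re_le_norm t]
  · rw [← Complex.add_conj, ← Complex.inv_eq_conj hnorm, inv_eq_of_mul_eq_one_right ht]
    ring

end Polynomial.Chebyshev

open Polynomial.Chebyshev

theorem Real.exists_C_eval_two_mul_cos_rat_mul_pi_eq_two (r : ℚ) :
    ∃ n : ℕ, n ≠ 0 ∧ (C ℝ n).eval (2 * cos (r * π)) = 2 := by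
  refine ⟨2 * r.den, by positivity, ?_⟩
  have hangle : ((2 * r.den : ℕ) : ℤ) * (r * π) = (r.num : ℝ) * (2 * π) := by
    have hr : (r : ℝ) * r.den = r.num := by exact_mod_cast r.mul_den_eq_num
    push_cast
    linear_combination (2 * π) * hr
  rw [C_two_mul_real_cos, hangle, cos_int_mul_two_pi, mul_one]

theorem norm_lt_two_of_aeval_minpoly_eq_zero {x : ℝ} {n : ℕ} (hn : n ≠ 0)
    (hx : (C ℝ n).eval x = 2) (hdeg : 1 < (minpoly ℚ x).natDegree) {z : ℂ}
    (hz : aeval z (minpoly ℚ x) = 0) : ‖z‖ < 2 := by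
  have hint : IsIntegral ℚ x := minpoly.ne_zero_iff.mp fun h => by simp [h] at hdeg
  have hdvd : minpoly ℚ x ∣ C ℚ n - 2 :=
    minpoly.dvd ℚ x (by simp [Chebyshev.aeval_C, hx, map_ofNat])
  have hzC : (C ℂ n).eval z = 2 := by
    simpa [Chebyshev.aeval_C, sub_eq_zero, map_ofNat] using
      aeval_eq_zero_of_dvd_aeval_eq_zero hdvd hz
  obtain ⟨u, hu, rfl⟩ := exists_abs_le_two_of_C_eval_eq_two hn hzC
  -- `x` and `u` share an irreducible minimal polynomial, which has no rational root such as `±2`.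
  have hconj : minpoly ℚ x = minpoly ℚ (u : ℂ) :=
    minpoly.eq_of_irreducible_of_monic (minpoly.irreducible hint) hz (minpoly.monic hint)
  rw [Complex.norm_real, Real.norm_eq_abs]
  refine hu.lt_of_ne fun hu2 => hdeg.ne' ?_
  rw [hconj, minpoly.natDegree_eq_one_iff]
  rcases (abs_eq zero_le_two).mp hu2 with rfl | rfl
  · exact ⟨2, by simp⟩
  · exact ⟨-2, by simp⟩

theorem irrational_of_one_lt_natDegree_minpoly {x : ℝ} (h : 1 < (minpoly ℚ x).natDegree) :
    Irrational x := by
  rintro ⟨q, rfl⟩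
  exact h.ne' (minpoly.natDegree_eq_one_iff.mpr ⟨q, rfl⟩)

theorem exists_int_minpoly_eq_X_sq_add {S : Type*} [CommRing S] [IsDomain S] [Algebra ℚ S]
    {x : S} (hx : IsIntegral ℤ x) (h : (minpoly ℚ x).natDegree = 2) :
    ∃ a b : ℤ, minpoly ℚ x = X ^ 2 + C (a : ℚ) * X + C (b : ℚ) := by
  have hmonic := minpoly.monic hx
  rw [minpoly.isIntegrallyClosed_eq_field_fractions' ℚ hx] at h ⊢
  rw [hmonic.natDegree_map] at h
  refine ⟨(minpoly ℤ x).coeff 1, (minpoly ℤ x).coeff 0, ?_⟩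
  conv_lhs => rw [hmonic.as_sum, h]
  simp only [algebraMap_int_eq, eq_intCast, Finset.sum_range_succ, Finset.range_one,
    Finset.sum_singleton, pow_zero, mul_one, pow_one, Polynomial.map_add, Polynomial.map_pow, map_X,
    Polynomial.map_intCast, Polynomial.map_mul, map_intCast]
  ring

theorem int_coeffs_of_irrational_roots_abs_lt_two {a b : ℤ} {x y : ℝ} (hsum : x + y = -a)
    (hprod : x * y = b) (hx : |x| < 2) (hy : |y| < 2) (hirr : Irrational x) :
    (a = 0 ∧ b = -2) ∨ (a = 0 ∧ b = -3) ∨ (a = 1 ∧ b = -1) ∨ (a = -1 ∧ b = -1) := by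
  obtain ⟨hx₁, hx₂⟩ := abs_lt.mp hx
  obtain ⟨hy₁, hy₂⟩ := abs_lt.mp hy
  have hy_eq : y = -a - x := by linear_combination hsum
  have hne : x ≠ y := fun h => hirr ⟨-a / 2, by push_cast; linarith⟩
  have hb0 : b ≠ 0 := by
    rintro rfl
    rcases mul_eq_zero.mp (hprod.trans Int.cast_zero) with h | h
    · exact hirr ⟨0, by simp [h]⟩
    · exact hirr ⟨-a, by push_cast; linarith⟩
  have hab : ¬(a = 0 ∧ b = -1) := by
    rintro ⟨rfl, rfl⟩
    have hsq : x ^ 2 = 1 ^ 2 := by push_cast at hy_eq hprod; nlinarith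
    rcases eq_or_eq_neg_of_sq_eq_sq _ _ hsq with h | h
    · exact hirr ⟨1, by simp [h]⟩
    · exact hirr ⟨-1, by simp [h]⟩
  -- `(2 - x) (2 - y)`, `(2 + x) (2 + y)` and `(x - y) ^ 2` are positive.
  have h₁ : (0 : ℝ) < 4 + 2 * a + b := by nlinarith
  have h₂ : (0 : ℝ) < 4 - 2 * a + b := by nlinarith
  have h₃ : (4 * b : ℝ) < a ^ 2 := by nlinarith [sq_pos_of_ne_zero (sub_ne_zero.mpr hne)]
  have ha : (|a| : ℝ) < 4 := by rw [abs_lt]; constructor <;> linarith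
  norm_cast at h₁ h₂ h₃ ha
  rw [abs_lt] at ha
  obtain ⟨ha₁, ha₂⟩ := ha
  interval_cases a <;> omega

theorem eq_of_two_mul_isRoot_of_int_coeffs {c : ℝ} {a b : ℤ}
    (hab : (a = 0 ∧ b = -2) ∨ (a = 0 ∧ b = -3) ∨ (a = 1 ∧ b = -1) ∨ (a = -1 ∧ b = -1))
    (h : (2 * c) ^ 2 + (a : ℝ) * (2 * c) + (b : ℝ) = 0) :
    c = 1 / √2 ∨ c = -(1 / √2) ∨ c = √3 / 2 ∨ c = -(√3 / 2) ∨
      c = 1 / 4 + √5 / 4 ∨ c = 1 / 4 - √5 / 4 ∨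
      c = -(1 / 4) + √5 / 4 ∨ c = -(1 / 4) - √5 / 4 := by
  have h2 : √2 ^ 2 = 2 := sq_sqrt zero_le_two
  have h3 : √3 ^ 2 = 3 := sq_sqrt zero_le_three
  have h5 : √5 ^ 2 = 5 := sq_sqrt (by norm_num)
  rcases hab with ⟨rfl, rfl⟩ | ⟨rfl, rfl⟩ | ⟨rfl, rfl⟩ | ⟨rfl, rfl⟩ <;> push_cast at h
  · have hsq : c ^ 2 = (1 / √2) ^ 2 := by
      rw [div_pow, h2]; linear_combination h / 4
    rcases eq_or_eq_neg_of_sq_eq_sq _ _ hsq with h | h <;> simp [h]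
  · have hsq : c ^ 2 = (√3 / 2) ^ 2 := by linear_combination h / 4 - h3 / 4
    rcases eq_or_eq_neg_of_sq_eq_sq _ _ hsq with h | h <;> simp [h]
  · have hsq : (c + 1 / 4) ^ 2 = (√5 / 4) ^ 2 := by linear_combination h / 4 - h5 / 16
    rcases eq_or_eq_neg_of_sq_eq_sq _ _ hsq with h | h
    · right; right; right; right; right; right; left; linear_combination h
    · right; right; right; right; right; right; right; linear_combination h
  · have hsq : (c - 1 / 4) ^ 2 = (√5 / 4) ^ 2 := by linear_combination h / 4 - h5 / 16
    rcases eq_or_eq_neg_of_sq_eq_sq _ _ hsq with h | h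
    · right; right; right; right; left; linear_combination h
    · right; right; right; right; right; left; linear_combination h

theorem cos_of_rat_mul_pi_degree_two_general (θ : ℝ)
    (p q : ℤ) (hθ : θ = ((p : ℝ) / (q : ℝ)) * Real.pi)
    (hdeg : (minpoly ℚ (Real.cos θ)).natDegree = 2) :
    (∃ a b : ℤ,
        (2 * Real.cos θ) ^ 2 + (a : ℝ) * (2 * Real.cos θ) + (b : ℝ) = 0 ∧
        ∀ z : ℂ, z ^ 2 + (a : ℂ) * z + (b : ℂ) = 0 → ‖z‖ < 2) ∧
      (Real.cos θ = 1 / Real.sqrt 2 ∨ Real.cos θ = -(1 / Real.sqrt 2) ∨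
        Real.cos θ = Real.sqrt 3 / 2 ∨ Real.cos θ = -(Real.sqrt 3 / 2) ∨
        Real.cos θ = 1 / 4 + Real.sqrt 5 / 4 ∨
        Real.cos θ = 1 / 4 - Real.sqrt 5 / 4 ∨
        Real.cos θ = -(1 / 4) + Real.sqrt 5 / 4 ∨
        Real.cos θ = -(1 / 4) - Real.sqrt 5 / 4) := by
  obtain ⟨r, rfl⟩ : ∃ r : ℚ, θ = r * π := ⟨p / q, by rw [hθ]; push_cast; rfl⟩
  set x := 2 * cos (r * π)
  obtain ⟨n, hn, hxn⟩ := exists_C_eval_two_mul_cos_rat_mul_pi_eq_two r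
  have hint : IsIntegral ℚ (cos (r * π)) := minpoly.ne_zero_iff.mp fun h => by simp [h] at hdeg
  have hdeg_x : (minpoly ℚ x).natDegree = 2 := by
    rw [← hdeg, show x = (2 : ℚ) • cos (r * π) by rw [two_smul, ← two_mul],
      IsIntegrallyClosed.minpoly_smul two_ne_zero hint, natDegree_scaleRoots]
  obtain ⟨a, b, hab⟩ := exists_int_minpoly_eq_X_sq_add (isIntegral_two_mul_cos_rat_mul_pi r) hdeg_x
  have hroot : x ^ 2 + a * x + b = 0 := by
    have hmin := minpoly.aeval ℚ x
    rw [hab] at hmin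
    simpa using hmin
  have hnorm : ∀ z : ℂ, z ^ 2 + a * z + b = 0 → ‖z‖ < 2 := fun z hz =>
    norm_lt_two_of_aeval_minpoly_eq_zero hn hxn (hdeg_x ▸ one_lt_two) (by simpa [hab] using hz)
  refine ⟨⟨a, b, hroot, hnorm⟩, ?_⟩
  have hrootC : (x : ℂ) ^ 2 + a * x + b = 0 := by exact_mod_cast hroot
  have hx : |x| < 2 := by
    simpa only [Complex.norm_real, Real.norm_eq_abs] using hnorm x hrootC
  have hy : |-a - x| < 2 := by
    have hyC : ((-a - x : ℝ) : ℂ) ^ 2 + a * ((-a - x : ℝ) : ℂ) + b = 0 := by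
      push_cast; linear_combination hrootC
    simpa only [Complex.norm_real, Real.norm_eq_abs] using hnorm _ hyC
  have hirr : Irrational x := irrational_of_one_lt_natDegree_minpoly (hdeg_x ▸ one_lt_two)
  exact eq_of_two_mul_isRoot_of_int_coeffs (int_coeffs_of_irrational_roots_abs_lt_two (by ring)
    (by linear_combination -hroot) hx hy hirr) hroot

/-- If `θ ∈ [0, 2π)` is a rational multiple of `π` and `cos θ` has algebraic
degree 2 over `ℚ`, then `2cos θ` is a root of a monic integer quadratic
`x² + ax + b` whose (complex) roots all have absolute value less than 2, and
consequently `cos θ ∈ {±1/√2, ±√3/2, ±1/4 ± √5/4}`. -/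
theorem cos_of_rat_mul_pi_degree_two (θ : ℝ) (h0 : 0 ≤ θ) (h2 : θ < 2 * Real.pi)
    (p q : ℤ) (hq : q ≠ 0) (hθ : θ = ((p : ℝ) / (q : ℝ)) * Real.pi)
    (hdeg : (minpoly ℚ (Real.cos θ)).natDegree = 2) :
    (∃ a b : ℤ,
        (2 * Real.cos θ) ^ 2 + (a : ℝ) * (2 * Real.cos θ) + (b : ℝ) = 0 ∧
        ∀ z : ℂ, z ^ 2 + (a : ℂ) * z + (b : ℂ) = 0 → ‖z‖ < 2) ∧
      (Real.cos θ = 1 / Real.sqrt 2 ∨ Real.cos θ = -(1 / Real.sqrt 2) ∨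
        Real.cos θ = Real.sqrt 3 / 2 ∨ Real.cos θ = -(Real.sqrt 3 / 2) ∨
        Real.cos θ = 1 / 4 + Real.sqrt 5 / 4 ∨
        Real.cos θ = 1 / 4 - Real.sqrt 5 / 4 ∨
        Real.cos θ = -(1 / 4) + Real.sqrt 5 / 4 ∨
        Real.cos θ = -(1 / 4) - Real.sqrt 5 / 4) :=
  cos_of_rat_mul_pi_degree_two_general θ p q hθ hdeg
end

section
/- Let θ ∈ (0, 2π), θ ∉ {π/2, π, 3π/2}, and let X₁₂ = θE₁₂, X₁₃ = θE₁₃, X₂₃ = θE₂₃ in 𝔰𝔬(3). Then the three elements log(e^{X₁₂}e^{X₁₃}), log(e^{X₁₂}e^{X₂₃}), log(e^{X₁₃}e^{X₂₃}) (given by the BCH formula for 𝔰𝔬(3)) are linearly independent, i.e., form a basis of 𝔰𝔬(3). -/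
/-!
When `‖X‖ = ‖Y‖ = θ`, i.e. `X = θ P`, `Y = θ Q` with `P`, `Q` of unit norm, the formula reads
`BCH(θ P, θ Q) = K (a (P + Q) + c [P, Q])`. In the coordinates of `E₁₂, E₁₃, E₂₃` the three
BCH elements are therefore the rows of `K • [[a, a, -c], [a, c, a], [-c, a, a]]`, whose
determinant `-K³ (2a³ + a²c + c³) = -8 K³ sin³(θ/2) cos⁶(θ/2) (2 cos³(θ/2) + sin(θ/2))`
vanishes on `(0, 2π)` only at `θ = π` and `θ = 3π/2`.
-/

open Real Matrix

/-- The BCH element `BCH(X,Y) = αX + βY + γ[X,Y]` for orthogonal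
`X, Y ∈ 𝔰𝔬(3)`, with the explicit coefficients
`α = (sin⁻¹(d)/d)(a/θ)`, `β = (sin⁻¹(d)/d)(b/φ)`, `γ = (sin⁻¹(d)/d)(c/(θφ))`,
where `a = sin θ cos²(φ/2)`, `b = sin φ cos²(θ/2)`, `c = (1/2)sin θ sin φ`,
`d = √(a²+b²+c²)`, `θ = ‖X‖`, `φ = ‖Y‖`. -/
noncomputable def bchSO3 (X Y : Matrix (Fin 3) (Fin 3) ℝ) :
    Matrix (Fin 3) (Fin 3) ℝ :=
  let θ := Real.sqrt ((1 / 2) * Matrix.trace (Xᵀ * X))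
  let φ := Real.sqrt ((1 / 2) * Matrix.trace (Yᵀ * Y))
  let a := Real.sin θ * Real.cos (φ / 2) ^ 2
  let b := Real.sin φ * Real.cos (θ / 2) ^ 2
  let c := (1 / 2) * Real.sin θ * Real.sin φ
  let d := Real.sqrt (a ^ 2 + b ^ 2 + c ^ 2)
  (Real.arcsin d / d * (a / θ)) • X + (Real.arcsin d / d * (b / φ)) • Y +
    (Real.arcsin d / d * (c / (θ * φ))) • (X * Y - Y * X)

theorem two_mul_cos_pow_three_add_sin_ne_zero {x : ℝ} (h0 : 0 < x) (hπ : x < π)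
    (hx : x ≠ 3 * π / 4) : 2 * cos x ^ 3 + sin x ≠ 0 := by
  intro h
  have hsin : sin x = -2 * cos x ^ 3 := by linarith
  have hcos_sq : cos x ^ 2 = 1 / 2 := by
    have hfac : (2 * cos x ^ 2 - 1) * (2 * cos x ^ 4 + cos x ^ 2 + 1) = 0 := by
      have hpyth := sin_sq_add_cos_sq x
      rw [hsin] at hpyth
      linear_combination hpyth
    have : 0 < 2 * cos x ^ 4 + cos x ^ 2 + 1 := by positivity
    linarith [(mul_eq_zero.mp hfac).resolve_right this.ne']
  have hsum : sin x + cos x = 0 := by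
    rw [hsin]; linear_combination (-2 * cos x) * hcos_sq
  have hzero : sin (x + π / 4 - π) = 0 := by
    rw [sin_sub_pi, sin_add, sin_pi_div_four, cos_pi_div_four]
    linear_combination (-(√2 / 2)) * hsum
  have := (sin_eq_zero_iff_of_lt_of_lt (by linarith) (by linarith)).mp hzero
  exact hx (by linarith)

section so3OfCoords

variable {R : Type*} [Ring R]

def so3OfCoords : (Fin 3 → R) →ₗ[R] Matrix (Fin 3) (Fin 3) R where
  toFun v := !![0, v 0, v 1; -v 0, 0, v 2; -v 1, -v 2, 0]
  map_add' u v := by ext i j; fin_cases i <;> fin_cases j <;> simp [add_comm]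
  map_smul' r v := by ext i j; fin_cases i <;> fin_cases j <;> simp

theorem so3OfCoords_apply (v : Fin 3 → R) :
    so3OfCoords v = !![0, v 0, v 1; -v 0, 0, v 2; -v 1, -v 2, 0] := rfl

theorem so3OfCoords_injective : Function.Injective (so3OfCoords (R := R)) := by
  intro u v h
  have h01 := congrFun (congrFun h 0) 1
  have h02 := congrFun (congrFun h 0) 2
  have h12 := congrFun (congrFun h 1) 2
  simp only [so3OfCoords_apply] at h01 h02 h12
  ext i; fin_cases i <;> simpa

theorem mem_range_so3OfCoords [IsAddTorsionFree R] {A : Matrix (Fin 3) (Fin 3) R}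
    (hA : Aᵀ = -A) : A ∈ LinearMap.range (so3OfCoords (R := R)) := by
  have hskew (i j : Fin 3) : A j i = -A i j := congrFun (congrFun hA i) j
  have hdiag (i : Fin 3) : A i i = 0 := self_eq_neg.mp (hskew i i)
  refine ⟨![A 0 1, A 0 2, A 1 2], ?_⟩
  ext i j
  fin_cases i <;> fin_cases j <;>
    simp [so3OfCoords_apply, hdiag, hskew 0 1, hskew 0 2, hskew 1 2]

end so3OfCoords

theorem span_range_comp_row_eq_range {K V ι : Type*} [Field K] [AddCommGroup V] [Module K V]
    [Fintype ι] [DecidableEq ι] (f : (ι → K) →ₗ[K] V) {M : Matrix ι ι K} (hM : M.det ≠ 0) :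
    Submodule.span K (Set.range (f ∘ M.row)) = LinearMap.range f := by
  have hrows : Submodule.span K (Set.range M.row) = ⊤ :=
    (linearIndependent_rows_of_det_ne_zero hM).span_eq_top_of_card_eq_finrank' (by simp)
  rw [Set.range_comp, Submodule.span_image, hrows, Submodule.map_top]

-- `a = b`, `c` and `arcsin d / d` of `bchSO3 X Y` when `‖X‖ = ‖Y‖ = θ`.
noncomputable def bchA (θ : ℝ) : ℝ := sin θ * cos (θ / 2) ^ 2

noncomputable def bchC (θ : ℝ) : ℝ := 1 / 2 * sin θ * sin θ

noncomputable def bchScale (θ : ℝ) : ℝ :=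
  arcsin √(bchA θ ^ 2 + bchA θ ^ 2 + bchC θ ^ 2) / √(bchA θ ^ 2 + bchA θ ^ 2 + bchC θ ^ 2)

theorem bchScale_pos {θ : ℝ} (h : bchA θ ≠ 0) : 0 < bchScale θ := by
  have hd : 0 < √(bchA θ ^ 2 + bchA θ ^ 2 + bchC θ ^ 2) := sqrt_pos.mpr (by positivity)
  exact div_pos (arcsin_pos.mpr hd) hd

theorem sin_eq_two_mul_sin_half_mul_cos_half (θ : ℝ) :
    sin θ = 2 * sin (θ / 2) * cos (θ / 2) := by
  rw [← sin_two_mul, mul_div_cancel₀ _ two_ne_zero]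

theorem sqrt_half_trace_transpose_smul_mul_smul {P : Matrix (Fin 3) (Fin 3) ℝ}
    (hP : trace (Pᵀ * P) = 2) {θ : ℝ} (hθ : 0 ≤ θ) :
    √(1 / 2 * trace ((θ • P)ᵀ * (θ • P))) = θ := by
  rw [transpose_smul, Matrix.smul_mul, Matrix.mul_smul, trace_smul, trace_smul, hP,
    smul_eq_mul, smul_eq_mul, show 1 / 2 * (θ * (θ * 2)) = θ ^ 2 by ring, sqrt_sq hθ]

theorem bchSO3_smul_smul {P Q : Matrix (Fin 3) (Fin 3) ℝ} (hP : trace (Pᵀ * P) = 2)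
    (hQ : trace (Qᵀ * Q) = 2) {θ : ℝ} (hθ : 0 < θ) :
    bchSO3 (θ • P) (θ • Q) =
      bchScale θ • (bchA θ • (P + Q) + bchC θ • (P * Q - Q * P)) := by
  simp only [bchSO3, sqrt_half_trace_transpose_smul_mul_smul hP hθ.le,
    sqrt_half_trace_transpose_smul_mul_smul hQ hθ.le]
  simp only [bchScale, bchA, bchC, Matrix.smul_mul, Matrix.mul_smul, smul_sub, smul_add,
    smul_smul]
  match_scalars <;> field_simp

noncomputable def bchCoordMatrix (θ : ℝ) : Matrix (Fin 3) (Fin 3) ℝ :=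
  bchScale θ • !![bchA θ, bchA θ, -bchC θ; bchA θ, bchC θ, bchA θ; -bchC θ, bchA θ, bchA θ]

theorem det_bchCoordMatrix (θ : ℝ) :
    (bchCoordMatrix θ).det = -8 * bchScale θ ^ 3 * sin (θ / 2) ^ 3 * cos (θ / 2) ^ 6 *
      (2 * cos (θ / 2) ^ 3 + sin (θ / 2)) := by
  rw [bchCoordMatrix, det_smul, det_fin_three]
  simp only [bchA, bchC, sin_eq_two_mul_sin_half_mul_cos_half θ, Fintype.card_fin, of_apply,
    cons_val', cons_val_zero, cons_val_one, cons_val_two, empty_val', cons_val_fin_one, head_cons,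
    tail_cons, head_fin_const]
  linear_combination (-8 * bchScale θ ^ 3 * sin (θ / 2) ^ 4 * cos (θ / 2) ^ 6) *
    sin_sq_add_cos_sq (θ / 2)

theorem det_bchCoordMatrix_ne_zero {θ : ℝ} (h0 : 0 < θ) (h2 : θ < 2 * π) (hpi : θ ≠ π)
    (h3 : θ ≠ 3 * π / 2) : (bchCoordMatrix θ).det ≠ 0 := by
  have hsin : 0 < sin (θ / 2) := sin_pos_of_pos_of_lt_pi (by linarith) (by linarith)
  have hcos : cos (θ / 2) ≠ 0 := by
    rcases lt_trichotomy (θ / 2) (π / 2) with h | h | h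
    · exact (cos_pos_of_mem_Ioo ⟨by linarith, h⟩).ne'
    · exact absurd (by linarith) hpi
    · exact (cos_neg_of_pi_div_two_lt_of_lt h (by linarith)).ne
  have hA : bchA θ ≠ 0 := by
    rw [bchA, sin_eq_two_mul_sin_half_mul_cos_half]
    positivity
  rw [det_bchCoordMatrix]
  have hcubic := two_mul_cos_pow_three_add_sin_ne_zero (x := θ / 2) (by linarith)
    (by linarith) (by contrapose! h3; linarith)
  have hK := (bchScale_pos hA).ne'
  positivity

theorem bch_elements_basis_general (θ : ℝ) (h0 : 0 < θ) (h2 : θ < 2 * Real.pi)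
    (hpi : θ ≠ Real.pi)
    (h3 : θ ≠ 3 * Real.pi / 2) :
    let E₁₂ : Matrix (Fin 3) (Fin 3) ℝ := !![0, 1, 0; -1, 0, 0; 0, 0, 0]
    let E₁₃ : Matrix (Fin 3) (Fin 3) ℝ := !![0, 0, 1; 0, 0, 0; -1, 0, 0]
    let E₂₃ : Matrix (Fin 3) (Fin 3) ℝ := !![0, 0, 0; 0, 0, 1; 0, -1, 0]
    let X₁₂ := θ • E₁₂
    let X₁₃ := θ • E₁₃
    let X₂₃ := θ • E₂₃
    LinearIndependent ℝ ![bchSO3 X₁₂ X₁₃, bchSO3 X₁₂ X₂₃, bchSO3 X₁₃ X₂₃] ∧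
      ∀ A : Matrix (Fin 3) (Fin 3) ℝ, Aᵀ = -A →
        A ∈ Submodule.span ℝ
          ({bchSO3 X₁₂ X₁₃, bchSO3 X₁₂ X₂₃, bchSO3 X₁₃ X₂₃} :
            Set (Matrix (Fin 3) (Fin 3) ℝ)) := by
  intro E₁₂ E₁₃ E₂₃ X₁₂ X₁₃ X₂₃
  have htrace : trace (E₁₂ᵀ * E₁₂) = 2 ∧ trace (E₁₃ᵀ * E₁₃) = 2 ∧ trace (E₂₃ᵀ * E₂₃) = 2 := by
    refine ⟨?_, ?_, ?_⟩ <;>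
      simp [E₁₂, E₁₃, E₂₃, trace_fin_three, mul_apply, Fin.sum_univ_three] <;> norm_num
  have hB : ![bchSO3 X₁₂ X₁₃, bchSO3 X₁₂ X₂₃, bchSO3 X₁₃ X₂₃] =
      so3OfCoords ∘ (bchCoordMatrix θ).row := by
    obtain ⟨h₁₂, h₁₃, h₂₃⟩ := htrace
    ext1 i
    fin_cases i
    all_goals
      simp only [X₁₂, X₁₃, X₂₃, bchSO3_smul_smul h₁₂ h₁₃ h0, bchSO3_smul_smul h₁₂ h₂₃ h0,
        bchSO3_smul_smul h₁₃ h₂₃ h0]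
      ext j k
      fin_cases j <;> fin_cases k <;> simp [E₁₂, E₁₃, E₂₃, bchCoordMatrix, so3OfCoords_apply]
  have hM := det_bchCoordMatrix_ne_zero h0 h2 hpi h3
  refine ⟨hB ▸ (linearIndependent_rows_of_det_ne_zero hM).map' _ ?_, fun A hA => ?_⟩
  · exact LinearMap.ker_eq_bot.mpr so3OfCoords_injective
  · have hrange : ({bchSO3 X₁₂ X₁₃, bchSO3 X₁₂ X₂₃, bchSO3 X₁₃ X₂₃} : Set _) =
        Set.range (so3OfCoords ∘ (bchCoordMatrix θ).row) := by
      rw [← hB, range_cons, range_cons_cons_empty, Set.singleton_union]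
    rw [hrange, span_range_comp_row_eq_range _ hM]
    exact mem_range_so3OfCoords hA

/-- For `θ ∈ (0, 2π)` with `θ ∉ {π/2, π, 3π/2}`, the three BCH elements
`log(e^{X₁₂}e^{X₁₃})`, `log(e^{X₁₂}e^{X₂₃})`, `log(e^{X₁₃}e^{X₂₃})` (given by
the BCH formula for `𝔰𝔬(3)`) are linearly independent, i.e. form a basis of
`𝔰𝔬(3)`. -/
theorem bch_elements_basis (θ : ℝ) (h0 : 0 < θ) (h2 : θ < 2 * Real.pi)
    (hhalf : θ ≠ Real.pi / 2) (hpi : θ ≠ Real.pi)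
    (h3 : θ ≠ 3 * Real.pi / 2) :
    let E₁₂ : Matrix (Fin 3) (Fin 3) ℝ := !![0, 1, 0; -1, 0, 0; 0, 0, 0]
    let E₁₃ : Matrix (Fin 3) (Fin 3) ℝ := !![0, 0, 1; 0, 0, 0; -1, 0, 0]
    let E₂₃ : Matrix (Fin 3) (Fin 3) ℝ := !![0, 0, 0; 0, 0, 1; 0, -1, 0]
    let X₁₂ := θ • E₁₂
    let X₁₃ := θ • E₁₃
    let X₂₃ := θ • E₂₃
    LinearIndependent ℝ ![bchSO3 X₁₂ X₁₃, bchSO3 X₁₂ X₂₃, bchSO3 X₁₃ X₂₃] ∧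
      ∀ A : Matrix (Fin 3) (Fin 3) ℝ, Aᵀ = -A →
        A ∈ Submodule.span ℝ
          ({bchSO3 X₁₂ X₁₃, bchSO3 X₁₂ X₂₃, bchSO3 X₁₃ X₂₃} :
            Set (Matrix (Fin 3) (Fin 3) ℝ)) :=
  bch_elements_basis_general θ h0 h2 hpi h3
end

section
/- In 𝔰𝔬(4), define A₁₂₃ = E₁₂ − E₁₃ + E₂₃, A₂₃₄ = E₂₃ − E₂₄ + E₃₄, A₁₃₄ = E₁₃ − E₁₄ + E₃₄, A₁₂₄ = E₁₂ − E₁₄ + E₂₄. Then A₁₂₃ + A₁₃₄ = A₁₂₄ + A₂₃₄, the real span of these four elements is 3-dimensional, and this span is closed under the Lie bracket (commutator), hence is a 3-dimensional Lie subalgebra of 𝔰𝔬(4). -/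
/-!
With `A_{ijk} = E_{ij} - E_{ik} + E_{jk}`, the relation is the cocycle identity
`A_{ijk} + A_{ikl} = A_{ijl} + A_{jkl}`, so `A₁₂₃` lies in the span of `A₂₃₄, A₁₃₄, A₁₂₄`.
These three are linearly independent, since each has an entry (at `E₂₃`, `E₁₃`, `E₁₂`
respectively) where the other two vanish, and their pairwise commutators are explicit linear
combinations of them; bilinearity of the commutator then closes the span.
-/

open Matrix

/-- The standard basis element `E_{ij} = e_ie_jᵀ − e_je_iᵀ` of `𝔰𝔬(4)`. -/
def Eso4 (i j : Fin 4) : Matrix (Fin 4) (Fin 4) ℝ :=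
  Matrix.single i j 1 - Matrix.single j i 1

open Submodule in
theorem commutator_mem_span_of_forall {R A : Type*} [CommSemiring R] [Ring A] [Algebra R A]
    {s : Set A} (hs : ∀ᵉ (x ∈ s) (y ∈ s), x * y - y * x ∈ span R s) {x y : A}
    (hx : x ∈ span R s) (hy : y ∈ span R s) : x * y - y * x ∈ span R s := by
  induction hx, hy using span_induction₂ with
  | mem_mem x y hx hy => exact hs x hx y hy
  | zero_left y hy => simp
  | zero_right x hx => simp
  | add_left x y z _ _ _ hx hy => convert add_mem hx hy using 1; noncomm_ring
  | add_right x y z _ _ _ hx hy => convert add_mem hx hy using 1; noncomm_ring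
  | smul_left r x y _ _ h => simpa [smul_sub] using smul_mem _ r h
  | smul_right r x y _ _ h => simpa [smul_sub] using smul_mem _ r h

theorem finrank_span_triple {K V : Type*} [DivisionRing K] [AddCommGroup V] [Module K V]
    {x y z : V} (h : LinearIndependent K ![x, y, z]) :
    Module.finrank K (Submodule.span K {x, y, z}) = 3 := by
  rw [← Matrix.range_cons_cons_empty y z ![], ← Set.singleton_union, ← Matrix.range_cons,
    finrank_span_eq_card h, Fintype.card_fin]

/-- `Aso4 i j k` is the paper's `A_{(i+1)(j+1)(k+1)}`: `Fin 4` indices start at `0`. -/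
def Aso4 (i j k : Fin 4) : Matrix (Fin 4) (Fin 4) ℝ :=
  Eso4 i j - Eso4 i k + Eso4 j k

theorem Aso4_add_Aso4 (i j k l : Fin 4) :
    Aso4 i j k + Aso4 i k l = Aso4 i j l + Aso4 j k l := by
  unfold Aso4
  abel

theorem Aso4_012_mem_span :
    Aso4 0 1 2 ∈ Submodule.span ℝ {Aso4 1 2 3, Aso4 0 2 3, Aso4 0 1 3} := by
  have h : Aso4 0 1 2 = Aso4 1 2 3 - Aso4 0 2 3 + Aso4 0 1 3 := by
    rw [sub_add_eq_add_sub, add_comm, ← Aso4_add_Aso4, add_sub_cancel_right]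
  rw [h]
  exact add_mem (sub_mem (Submodule.subset_span (by simp)) (Submodule.subset_span (by simp)))
    (Submodule.subset_span (by simp))

theorem linearIndependent_Aso4 :
    LinearIndependent ℝ ![Aso4 1 2 3, Aso4 0 2 3, Aso4 0 1 3] := by
  refine .of_pairwise_dual_eq_zero_one _
    ![entryLinearMap ℝ ℝ 1 2, entryLinearMap ℝ ℝ 0 2, entryLinearMap ℝ ℝ 0 1] ?_ ?_
  · intro i j hij
    fin_cases i <;> fin_cases j <;> simp_all [Aso4, Eso4]
  · intro i
    fin_cases i <;> simp [Aso4, Eso4]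

theorem commutator_Aso4_123_Aso4_023 :
    Aso4 1 2 3 * Aso4 0 2 3 - Aso4 0 2 3 * Aso4 1 2 3 =
      Aso4 1 2 3 - Aso4 0 2 3 + (2 : ℝ) • Aso4 0 1 3 := by
  ext i j
  fin_cases i <;> fin_cases j <;>
    simp [Aso4, Eso4, mul_apply, Fin.sum_univ_four, single_apply] <;> norm_num

theorem commutator_Aso4_123_Aso4_013 :
    Aso4 1 2 3 * Aso4 0 1 3 - Aso4 0 1 3 * Aso4 1 2 3 =
      Aso4 1 2 3 - (2 : ℝ) • Aso4 0 2 3 + Aso4 0 1 3 := by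
  ext i j
  fin_cases i <;> fin_cases j <;>
    simp [Aso4, Eso4, mul_apply, Fin.sum_univ_four, single_apply] <;> norm_num

theorem commutator_Aso4_023_Aso4_013 :
    Aso4 0 2 3 * Aso4 0 1 3 - Aso4 0 1 3 * Aso4 0 2 3 =
      (2 : ℝ) • Aso4 1 2 3 - Aso4 0 2 3 + Aso4 0 1 3 := by
  ext i j
  fin_cases i <;> fin_cases j <;>
    simp [Aso4, Eso4, mul_apply, Fin.sum_univ_four, single_apply] <;> norm_num

theorem commutator_mem_span_Aso4 :
    ∀ᵉ (x ∈ ({Aso4 1 2 3, Aso4 0 2 3, Aso4 0 1 3} : Set (Matrix (Fin 4) (Fin 4) ℝ)))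
      (y ∈ ({Aso4 1 2 3, Aso4 0 2 3, Aso4 0 1 3} : Set (Matrix (Fin 4) (Fin 4) ℝ))),
      x * y - y * x ∈ Submodule.span ℝ {Aso4 1 2 3, Aso4 0 2 3, Aso4 0 1 3} := by
  have h₁ : Aso4 1 2 3 ∈ Submodule.span ℝ {Aso4 1 2 3, Aso4 0 2 3, Aso4 0 1 3} :=
    Submodule.subset_span (by simp)
  have h₂ : Aso4 0 2 3 ∈ Submodule.span ℝ {Aso4 1 2 3, Aso4 0 2 3, Aso4 0 1 3} :=
    Submodule.subset_span (by simp)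
  have h₃ : Aso4 0 1 3 ∈ Submodule.span ℝ {Aso4 1 2 3, Aso4 0 2 3, Aso4 0 1 3} :=
    Submodule.subset_span (by simp)
  have h₁₂ := commutator_Aso4_123_Aso4_023 ▸ add_mem (sub_mem h₁ h₂) (Submodule.smul_mem _ 2 h₃)
  have h₁₃ := commutator_Aso4_123_Aso4_013 ▸ add_mem (sub_mem h₁ (Submodule.smul_mem _ 2 h₂)) h₃
  have h₂₃ := commutator_Aso4_023_Aso4_013 ▸ add_mem (sub_mem (Submodule.smul_mem _ 2 h₁) h₂) h₃
  rintro x (rfl | rfl | rfl) y (rfl | rfl | rfl) <;>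
    simp only [sub_self, zero_mem, ← neg_sub (Aso4 1 2 3 * Aso4 0 2 3),
      ← neg_sub (Aso4 1 2 3 * Aso4 0 1 3), ← neg_sub (Aso4 0 2 3 * Aso4 0 1 3), neg_mem_iff,
      h₁₂, h₁₃, h₂₃]

/-- With `A₁₂₃ = E₁₂ − E₁₃ + E₂₃`, `A₂₃₄ = E₂₃ − E₂₄ + E₃₄`,
`A₁₃₄ = E₁₃ − E₁₄ + E₃₄`, `A₁₂₄ = E₁₂ − E₁₄ + E₂₄` in `𝔰𝔬(4)`, one has
`A₁₂₃ + A₁₃₄ = A₁₂₄ + A₂₃₄`, the span of the four elements is 3-dimensional,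
and it is closed under the commutator bracket. -/
theorem span_A_subalgebra :
    let A₁₂₃ := Eso4 0 1 - Eso4 0 2 + Eso4 1 2
    let A₂₃₄ := Eso4 1 2 - Eso4 1 3 + Eso4 2 3
    let A₁₃₄ := Eso4 0 2 - Eso4 0 3 + Eso4 2 3
    let A₁₂₄ := Eso4 0 1 - Eso4 0 3 + Eso4 1 3
    A₁₂₃ + A₁₃₄ = A₁₂₄ + A₂₃₄ ∧
      Module.finrank ℝ
          (Submodule.span ℝ ({A₁₂₃, A₂₃₄, A₁₃₄, A₁₂₄} :
            Set (Matrix (Fin 4) (Fin 4) ℝ))) = 3 ∧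
      ∀ X ∈ Submodule.span ℝ ({A₁₂₃, A₂₃₄, A₁₃₄, A₁₂₄} :
          Set (Matrix (Fin 4) (Fin 4) ℝ)),
        ∀ Y ∈ Submodule.span ℝ ({A₁₂₃, A₂₃₄, A₁₃₄, A₁₂₄} :
            Set (Matrix (Fin 4) (Fin 4) ℝ)),
          X * Y - Y * X ∈ Submodule.span ℝ ({A₁₂₃, A₂₃₄, A₁₃₄, A₁₂₄} :
            Set (Matrix (Fin 4) (Fin 4) ℝ)) := by
  intro A₁₂₃ A₂₃₄ A₁₃₄ A₁₂₄
  have hspan : Submodule.span ℝ {A₁₂₃, A₂₃₄, A₁₃₄, A₁₂₄} =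
      Submodule.span ℝ {Aso4 1 2 3, Aso4 0 2 3, Aso4 0 1 3} :=
    Submodule.span_insert_eq_span Aso4_012_mem_span
  rw [hspan]
  exact ⟨Aso4_add_Aso4 0 1 2 3, finrank_span_triple linearIndependent_Aso4,
    fun X hX Y hY => commutator_mem_span_of_forall commutator_mem_span_Aso4 hX hY⟩
end

section
/- With A₁₂₃, A₂₃₄, A₁₃₄, A₁₂₄ ∈ 𝔰𝔬(4) as above, set X = (1/4)(A₁₂₃+A₂₃₄+A₁₃₄+A₁₂₄), Y = (1/4)(A₁₂₃+A₂₃₄−A₁₃₄−A₁₂₄), Z = −(1/4)(A₁₂₃−A₂₃₄−A₁₃₄+A₁₂₄). Then [X,Y] = Z, [Z,X] = Y, [Y,Z] = X, so Span_ℝ{A₁₂₃,A₂₃₄,A₁₃₄,A₁₂₄} is a Lie algebra isomorphic to 𝔰𝔬(3). -/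
/-!
The four matrices satisfy the single linear relation `A₁₂₃ + A₁₃₄ = A₂₃₄ + A₁₂₄`, so each of them is
one of `X ± Y ± Z`, and their Lie span is that of the linearly independent triple `X, Y, Z`, whose
brackets are a direct matrix computation.

A triple with `⁅X, Y⁆ = Z`, `⁅Y, Z⁆ = X`, `⁅Z, X⁆ = Y` in any Lie algebra is the image of the
standard basis of `𝔰𝔬(3)` under a Lie algebra morphism: the hat map identifies `𝔰𝔬(3)` with
`(R³, ⨯₃)`, and `v ↦ v₀ X + v₁ Y + v₂ Z` turns the cross product into the bracket. For independent
`X, Y, Z` this morphism is injective, and its image is the linear span of `X, Y, Z`, which is thus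
their Lie span.
-/

open Matrix

attribute [local instance 100] LieRing.ofAssociativeRing

open LieAlgebra.Orthogonal

lemma Matrix.diag_eq_zero_of_transpose_eq_neg {α n : Type*} [AddGroup α] [IsAddTorsionFree α]
    {a : Matrix n n α} (ha : aᵀ = -a) (i : n) : a i i = 0 := by
  have h : a i i = -a i i := congrFun (congrFun ha i) i
  have h2 : 2 • a i i = 2 • 0 := by
    rw [two_nsmul, smul_zero]
    nth_rewrite 1 [h]
    exact neg_add_cancel _
  exact nsmul_right_injective two_ne_zero h2

lemma LieSubalgebra.lieSpan_eq_of_toSubmodule_eq_span {R L : Type*} [CommRing R] [LieRing L]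
    [LieAlgebra R L] {K : LieSubalgebra R L} {s : Set L}
    (h : K.toSubmodule = Submodule.span R s) : lieSpan R L s = K := by
  refine le_antisymm (lieSpan_le.mpr fun x hx ↦ ?_) ?_
  · rw [SetLike.mem_coe, ← mem_toSubmodule, h]
    exact Submodule.subset_span hx
  · rw [← toSubmodule_le_toSubmodule, h]
    exact submodule_span_le_lieSpan

section So3

variable (R : Type*) [CommRing R]

/-- The inverse of the hat map `R³ → 𝔰𝔬(3)`. -/
def so3Coord : so (Fin 3) R →ₗ[R] Fin 3 → R where
  toFun a := ![a.1 2 1, a.1 0 2, a.1 1 0]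
  map_add' a b := by ext i; fin_cases i <;> rfl
  map_smul' r a := by ext i; fin_cases i <;> rfl

lemma so3Coord_apply (a : so (Fin 3) R) : so3Coord R a = ![a.1 2 1, a.1 0 2, a.1 1 0] := rfl

lemma so3Coord_surjective : Function.Surjective (so3Coord R) := by
  intro v
  refine ⟨⟨!![0, -v 2, v 1; v 2, 0, -v 0; -v 1, v 0, 0], ?_⟩, ?_⟩
  · rw [mem_so]
    ext i j
    fin_cases i <;> fin_cases j <;> simp
  · ext i
    fin_cases i <;> rfl

variable {R} [IsAddTorsionFree R]

lemma so3Coord_injective : Function.Injective (so3Coord R) := by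
  rw [← LinearMap.ker_eq_bot, LinearMap.ker_eq_bot']
  rintro ⟨a, ha⟩ h
  rw [mem_so] at ha
  have hskew (i j : Fin 3) : a j i = -a i j := congrFun (congrFun ha i) j
  have hx : a 2 1 = 0 := congrFun h 0
  have hy : a 0 2 = 0 := congrFun h 1
  have hz : a 1 0 = 0 := congrFun h 2
  ext i j
  fin_cases i <;> fin_cases j <;>
    simp [diag_eq_zero_of_transpose_eq_neg ha, hskew 2 1, hskew 0 2, hskew 1 0, hx, hy, hz]

lemma so3Coord_lie (a b : so (Fin 3) R) :
    so3Coord R ⁅a, b⁆ = so3Coord R a ⨯₃ so3Coord R b := by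
  obtain ⟨a, ha⟩ := a
  obtain ⟨b, hb⟩ := b
  rw [mem_so] at ha hb
  have ha' (i j : Fin 3) : a j i = -a i j := congrFun (congrFun ha i) j
  have hb' (i j : Fin 3) : b j i = -b i j := congrFun (congrFun hb i) j
  simp only [so3Coord_apply, cross_apply, LieSubalgebra.coe_bracket, Ring.lie_def, Matrix.sub_apply,
    mul_apply, Fin.sum_univ_three, cons_val, diag_eq_zero_of_transpose_eq_neg ha,
    diag_eq_zero_of_transpose_eq_neg hb, ha' 2 1, ha' 0 2, ha' 1 0, hb' 2 1, hb' 0 2, hb' 1 0]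
  refine vec3_eq ?_ ?_ ?_ <;> ring

end So3

section So3ToLie

variable (R : Type*) [CommRing R] {L : Type*} [LieRing L] [LieAlgebra R L] {X Y Z : L}
  (hXY : ⁅X, Y⁆ = Z) (hYZ : ⁅Y, Z⁆ = X) (hZX : ⁅Z, X⁆ = Y)
include hXY hYZ hZX

lemma linearCombination_cross_eq_lie (u v : Fin 3 → R) :
    Fintype.linearCombination R ![X, Y, Z] (u ⨯₃ v) =
      ⁅Fintype.linearCombination R ![X, Y, Z] u, Fintype.linearCombination R ![X, Y, Z] v⁆ := by
  have hYX : ⁅Y, X⁆ = -Z := by rw [← lie_skew, hXY]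
  have hZY : ⁅Z, Y⁆ = -X := by rw [← lie_skew, hYZ]
  have hXZ : ⁅X, Z⁆ = -Y := by rw [← lie_skew, hZX]
  simp only [Fintype.linearCombination_apply, Fin.sum_univ_three, cross_apply, cons_val, lie_add,
    add_lie, lie_smul, smul_lie, lie_self, hXY, hYZ, hZX, hYX, hZY, hXZ]
  module

variable [IsAddTorsionFree R]

def so3ToLie : so (Fin 3) R →ₗ⁅R⁆ L :=
  { Fintype.linearCombination R ![X, Y, Z] ∘ₗ so3Coord R with
    map_lie' {a b} := by
      simp [so3Coord_lie, linearCombination_cross_eq_lie R hXY hYZ hZX] }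

variable {R}

lemma so3ToLie_injective (hli : LinearIndependent R ![X, Y, Z]) :
    Function.Injective (so3ToLie R hXY hYZ hZX) :=
  hli.fintypeLinearCombination_injective.comp so3Coord_injective

lemma lieSpan_eq_so3ToLie_range :
    LieSubalgebra.lieSpan R L (Set.range ![X, Y, Z]) = (so3ToLie R hXY hYZ hZX).range := by
  refine LieSubalgebra.lieSpan_eq_of_toSubmodule_eq_span ?_
  change LinearMap.range (Fintype.linearCombination R ![X, Y, Z] ∘ₗ so3Coord R) = _
  rw [LinearMap.range_comp_of_range_eq_top _ (LinearMap.range_eq_top.mpr (so3Coord_surjective R)),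
    Fintype.range_linearCombination]

noncomputable def lieSpanEquivSo3 (hli : LinearIndependent R ![X, Y, Z]) :
    LieSubalgebra.lieSpan R L (Set.range ![X, Y, Z]) ≃ₗ⁅R⁆ so (Fin 3) R :=
  (LieEquiv.ofEq _ _ (congrArg _ (lieSpan_eq_so3ToLie_range hXY hYZ hZX))).trans
    ((so3ToLie R hXY hYZ hZX).equivRangeOfInjective (so3ToLie_injective hXY hYZ hZX hli)).symm

end So3ToLie

namespace Eso4

def A₁₂₃ : Matrix (Fin 4) (Fin 4) ℝ := Eso4 0 1 - Eso4 0 2 + Eso4 1 2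
def A₂₃₄ : Matrix (Fin 4) (Fin 4) ℝ := Eso4 1 2 - Eso4 1 3 + Eso4 2 3
def A₁₃₄ : Matrix (Fin 4) (Fin 4) ℝ := Eso4 0 2 - Eso4 0 3 + Eso4 2 3
def A₁₂₄ : Matrix (Fin 4) (Fin 4) ℝ := Eso4 0 1 - Eso4 0 3 + Eso4 1 3

noncomputable def X : Matrix (Fin 4) (Fin 4) ℝ := (1 / 4 : ℝ) • (A₁₂₃ + A₂₃₄ + A₁₃₄ + A₁₂₄)
noncomputable def Y : Matrix (Fin 4) (Fin 4) ℝ := (1 / 4 : ℝ) • (A₁₂₃ + A₂₃₄ - A₁₃₄ - A₁₂₄)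
noncomputable def Z : Matrix (Fin 4) (Fin 4) ℝ := -((1 / 4 : ℝ) • (A₁₂₃ - A₂₃₄ - A₁₃₄ + A₁₂₄))

lemma A₁₂₃_add_A₁₃₄ : A₁₂₃ + A₁₃₄ = A₂₃₄ + A₁₂₄ := by
  simp only [A₁₂₃, A₂₃₄, A₁₃₄, A₁₂₄]
  abel

lemma A₁₂₃_eq : A₁₂₃ = X + Y - Z := by
  simp only [X, Y, Z]
  linear_combination (norm := module) (1 / 4 : ℝ) • A₁₂₃_add_A₁₃₄

lemma A₂₃₄_eq : A₂₃₄ = X + Y + Z := by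
  simp only [X, Y, Z]
  linear_combination (norm := module) (-1 / 4 : ℝ) • A₁₂₃_add_A₁₃₄

lemma A₁₃₄_eq : A₁₃₄ = X - Y + Z := by
  simp only [X, Y, Z]
  linear_combination (norm := module) (1 / 4 : ℝ) • A₁₂₃_add_A₁₃₄

lemma A₁₂₄_eq : A₁₂₄ = X - Y - Z := by
  simp only [X, Y, Z]
  linear_combination (norm := module) (-1 / 4 : ℝ) • A₁₂₃_add_A₁₃₄

lemma X_eq : X = !![0, 1/2, 0, -1/2; -1/2, 0, 1/2, 0; 0, -1/2, 0, 1/2; 1/2, 0, -1/2, 0] := by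
  ext i j
  fin_cases i <;> fin_cases j <;>
    norm_num [X, A₁₂₃, A₂₃₄, A₁₃₄, A₁₂₄, Eso4, single_apply, Fin.ext_iff]

lemma Y_eq : Y = !![0, 0, -1/2, 1/2; 0, 0, 1/2, -1/2; 1/2, -1/2, 0, 0; -1/2, 1/2, 0, 0] := by
  ext i j
  fin_cases i <;> fin_cases j <;>
    norm_num [Y, A₁₂₃, A₂₃₄, A₁₃₄, A₁₂₄, Eso4, single_apply, Fin.ext_iff]

lemma Z_eq : Z = !![0, -1/2, 1/2, 0; 1/2, 0, 0, -1/2; -1/2, 0, 0, 1/2; 0, 1/2, -1/2, 0] := by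
  ext i j
  fin_cases i <;> fin_cases j <;>
    norm_num [Z, A₁₂₃, A₂₃₄, A₁₃₄, A₁₂₄, Eso4, single_apply, Fin.ext_iff]

lemma lie_X_Y : ⁅X, Y⁆ = Z := by
  rw [X_eq, Y_eq, Z_eq, Ring.lie_def]
  ext i j
  fin_cases i <;> fin_cases j <;> norm_num [mul_apply, Fin.sum_univ_four]

lemma lie_Y_Z : ⁅Y, Z⁆ = X := by
  rw [X_eq, Y_eq, Z_eq, Ring.lie_def]
  ext i j
  fin_cases i <;> fin_cases j <;> norm_num [mul_apply, Fin.sum_univ_four]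

lemma lie_Z_X : ⁅Z, X⁆ = Y := by
  rw [X_eq, Y_eq, Z_eq, Ring.lie_def]
  ext i j
  fin_cases i <;> fin_cases j <;> norm_num [mul_apply, Fin.sum_univ_four]

lemma linearIndependent_X_Y_Z : LinearIndependent ℝ ![X, Y, Z] := by
  rw [Fintype.linearIndependent_iff]
  intro g hg
  have hentry (i j : Fin 4) : g 0 * X i j + g 1 * Y i j + g 2 * Z i j = 0 := by
    simpa [Fin.sum_univ_three] using congrFun (congrFun hg i) j
  have h01 := hentry 0 1
  have h02 := hentry 0 2
  have h12 := hentry 1 2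
  simp only [X_eq, Y_eq, Z_eq, of_apply, cons_val] at h01 h02 h12
  have h0 : g 0 = 0 := by linarith
  have h1 : g 1 = 0 := by linarith
  have h2 : g 2 = 0 := by linarith
  intro i
  fin_cases i <;> assumption

lemma lieSpan_A_eq_lieSpan_X_Y_Z :
    LieSubalgebra.lieSpan ℝ (Matrix (Fin 4) (Fin 4) ℝ) {A₁₂₃, A₂₃₄, A₁₃₄, A₁₂₄} =
      LieSubalgebra.lieSpan ℝ _ (Set.range ![X, Y, Z]) := by
  set S := LieSubalgebra.lieSpan ℝ (Matrix (Fin 4) (Fin 4) ℝ) {A₁₂₃, A₂₃₄, A₁₃₄, A₁₂₄}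
  set T := LieSubalgebra.lieSpan ℝ (Matrix (Fin 4) (Fin 4) ℝ) (Set.range ![X, Y, Z])
  have h₁₂₃ : A₁₂₃ ∈ S := LieSubalgebra.subset_lieSpan (by simp)
  have h₂₃₄ : A₂₃₄ ∈ S := LieSubalgebra.subset_lieSpan (by simp)
  have h₁₃₄ : A₁₃₄ ∈ S := LieSubalgebra.subset_lieSpan (by simp)
  have h₁₂₄ : A₁₂₄ ∈ S := LieSubalgebra.subset_lieSpan (by simp)
  have hX : X ∈ T := LieSubalgebra.subset_lieSpan ⟨0, rfl⟩
  have hY : Y ∈ T := LieSubalgebra.subset_lieSpan ⟨1, rfl⟩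
  have hZ : Z ∈ T := LieSubalgebra.subset_lieSpan ⟨2, rfl⟩
  apply le_antisymm <;> rw [LieSubalgebra.lieSpan_le]
  · rintro _ (rfl | rfl | rfl | rfl)
    · rw [A₁₂₃_eq]; exact sub_mem (add_mem hX hY) hZ
    · rw [A₂₃₄_eq]; exact add_mem (add_mem hX hY) hZ
    · rw [A₁₃₄_eq]; exact add_mem (sub_mem hX hY) hZ
    · rw [A₁₂₄_eq]; exact sub_mem (sub_mem hX hY) hZ
  · rintro _ ⟨i, rfl⟩
    fin_cases i
    · exact S.smul_mem _ (add_mem (add_mem (add_mem h₁₂₃ h₂₃₄) h₁₃₄) h₁₂₄)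
    · exact S.smul_mem _ (sub_mem (sub_mem (add_mem h₁₂₃ h₂₃₄) h₁₃₄) h₁₂₄)
    · exact neg_mem (S.smul_mem _ (add_mem (sub_mem (sub_mem h₁₂₃ h₂₃₄) h₁₃₄) h₁₂₄))

end Eso4

/-- With `X = (1/4)(A₁₂₃+A₂₃₄+A₁₃₄+A₁₂₄)`, `Y = (1/4)(A₁₂₃+A₂₃₄−A₁₃₄−A₁₂₄)`,
`Z = −(1/4)(A₁₂₃−A₂₃₄−A₁₃₄+A₁₂₄)` one has `[X,Y] = Z`, `[Z,X] = Y`,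
`[Y,Z] = X`, so the span of `{A₁₂₃,A₂₃₄,A₁₃₄,A₁₂₄}` is a Lie algebra
isomorphic to `𝔰𝔬(3)`. -/
theorem span_A_iso_so3 :
    let A₁₂₃ := Eso4 0 1 - Eso4 0 2 + Eso4 1 2
    let A₂₃₄ := Eso4 1 2 - Eso4 1 3 + Eso4 2 3
    let A₁₃₄ := Eso4 0 2 - Eso4 0 3 + Eso4 2 3
    let A₁₂₄ := Eso4 0 1 - Eso4 0 3 + Eso4 1 3
    let X := (1 / 4 : ℝ) • (A₁₂₃ + A₂₃₄ + A₁₃₄ + A₁₂₄)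
    let Y := (1 / 4 : ℝ) • (A₁₂₃ + A₂₃₄ - A₁₃₄ - A₁₂₄)
    let Z := -((1 / 4 : ℝ) • (A₁₂₃ - A₂₃₄ - A₁₃₄ + A₁₂₄))
    X * Y - Y * X = Z ∧ Z * X - X * Z = Y ∧ Y * Z - Z * Y = X ∧
      Nonempty
        ((LieSubalgebra.lieSpan ℝ (Matrix (Fin 4) (Fin 4) ℝ)
            ({A₁₂₃, A₂₃₄, A₁₃₄, A₁₂₄} : Set (Matrix (Fin 4) (Fin 4) ℝ))) ≃ₗ⁅ℝ⁆
          (skewAdjointMatricesLieSubalgebra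
            (1 : Matrix (Fin 3) (Fin 3) ℝ))) :=
  ⟨Eso4.lie_X_Y, Eso4.lie_Z_X, Eso4.lie_Y_Z,
    ⟨(LieEquiv.ofEq _ _ (congrArg _ Eso4.lieSpan_A_eq_lieSpan_X_Y_Z)).trans
      (lieSpanEquivSo3 Eso4.lie_X_Y Eso4.lie_Y_Z Eso4.lie_Z_X Eso4.linearIndependent_X_Y_Z)⟩⟩
end
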